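/- Fix a real ξ > 0, an integer M ≥ 1, and positive reals C and a. Let W be a random variable with probability density function f_W(x) = (ξ^M / ((M−1)! · C^ξ)) · x^{ξ−1} · (ln(C/x))^{M−1} on (0, C] (zero elsewhere), and let l be a random variable, independent of W, with probability density function f_l(t) = (ξ / a^ξ) · t^{ξ−1} on [0, a] (zero elsewhere). Then the product W · l has probability density function f(x) = (ξ^{M+1} / (M! · (C·a)^ξ)) · x^{ξ−1} · (ln(C·a / x))^{M} on (0, C·a] (zero elsewhere). -/

import Mathlib

/-!
Writing `f_M` for the cascade density, the density of `W * l` is the Mellin convolution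
`x ↦ ∫ f_M(w) f_l(x / w) |w|⁻¹ dw`, obtained from the joint law `f_M ⊗ f_l` by the
substitution `t = x / w` in the inner integral. For `0 < x ≤ C a` the integrand is supported on
`[x / a, C]`, where the powers of `w` cancel to `x^(ξ-1) / w`, and
`∫_{x/a}^C log(C / w)^(M-1) dw / w = log(C a / x)^M / M` produces the next factorial.
The single-link density agrees with the cascade density for one link off `{0}`.
-/

open MeasureTheory ProbabilityTheory Set
open scoped ENNReal Nat

theorem Real.lintegral_comp_mul_left (g : ℝ → ℝ≥0∞) {c : ℝ} (hc : c ≠ 0) :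
    ∫⁻ t, g (c * t) = ENNReal.ofReal |c⁻¹| * ∫⁻ x, g x := by
  rw [← smul_eq_mul, ← lintegral_smul_measure, ← Real.map_volume_mul_left hc]
  exact (lintegral_map_equiv g (Homeomorph.mulLeft₀ c hc).toMeasurableEquiv).symm

noncomputable def mellinConv (f g : ℝ → ℝ≥0∞) (x : ℝ) : ℝ≥0∞ :=
  ∫⁻ w, f w * g (x / w) * ENNReal.ofReal |w⁻¹|

theorem map_mul_prod_withDensity {f g : ℝ → ℝ≥0∞} (hf : Measurable f)
    (hg : Measurable g) :
    ((volume.withDensity f).prod (volume.withDensity g)).map (fun p => p.1 * p.2) =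
      volume.withDensity (mellinConv f g) := by
  have hmul : Measurable fun p : ℝ × ℝ => p.1 * p.2 := by fun_prop
  ext s hs
  have hsection : ∀ w ≠ 0, ∫⁻ t, ((fun p : ℝ × ℝ => p.1 * p.2) ⁻¹' s).indicator
        (fun p => f p.1 * g p.2) (w, t) =
      ∫⁻ x in s, f w * g (x / w) * ENNReal.ofReal |w⁻¹| := by
    intro w hw
    rw [lintegral_mul_const' _ _ ENNReal.ofReal_ne_top, ← lintegral_indicator hs, mul_comm,
      ← Real.lintegral_comp_mul_left _ hw]
    congr 1 with t
    simp only [Set.indicator, mul_div_cancel_left₀ _ hw]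
    rfl
  rw [prod_withDensity hf hg, Measure.map_apply hmul hs, withDensity_apply _ (hmul hs),
    ← lintegral_indicator (hmul hs),
    lintegral_prod _ (((by fun_prop : Measurable fun p : ℝ × ℝ => f p.1 * g p.2).indicator
      (hmul hs)).aemeasurable), withDensity_apply _ hs]
  unfold mellinConv
  conv_rhs => rw [lintegral_lintegral_swap (by fun_prop)]
  exact lintegral_congr_ae ((Measure.ae_ne volume 0).mono hsection)

theorem ProbabilityTheory.IndepFun.map_mul_eq_withDensity_mellinConv {Ω : Type*}
    [MeasurableSpace Ω] {P : Measure Ω} [IsFiniteMeasure P] {X Y : Ω → ℝ} (hX : Measurable X)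
    (hY : Measurable Y) (hXY : IndepFun X Y P) {f g : ℝ → ℝ≥0∞} (hf : Measurable f)
    (hg : Measurable g)
    (hdX : P.map X = volume.withDensity f) (hdY : P.map Y = volume.withDensity g) :
    P.map (fun ω => X ω * Y ω) = volume.withDensity (mellinConv f g) := by
  rw [← map_mul_prod_withDensity hf hg, ← hdX, ← hdY,
    ← hXY.map_prod_eq_prod_map_map hX.aemeasurable hY.aemeasurable,
    Measure.map_map (by fun_prop) (hX.prodMk hY)]
  rfl

theorem integral_log_div_pow_mul_inv {b C : ℝ} (hb : 0 < b) (hC : 0 < C) (n : ℕ) :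
    ∫ w in b..C, Real.log (C / w) ^ n * w⁻¹ = Real.log (C / b) ^ (n + 1) / (n + 1) := by
  have hpos : ∀ w ∈ uIcc b C, 0 < w := fun w hw =>
    lt_of_lt_of_le (lt_min hb hC) hw.1
  have hderiv : ∀ w ∈ uIcc b C, HasDerivAt (fun w => -(Real.log (C / w) ^ (n + 1) / (n + 1)))
      (Real.log (C / w) ^ n * w⁻¹) w := by
    intro w hw
    have hw0 := (hpos w hw).ne'
    have hlog : HasDerivAt (fun w => Real.log (C / w)) (-w⁻¹) w := by
      convert ((hasDerivAt_inv hw0).const_mul C).log (by positivity) using 1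
      · ext; rw [div_eq_mul_inv]
      · field_simp
    refine (((hlog.fun_pow (n + 1)).div_const ((n : ℝ) + 1)).fun_neg).congr_deriv ?_
    rw [Nat.add_sub_cancel]
    push_cast
    field_simp
  rw [intervalIntegral.integral_eq_sub_of_hasDerivAt hderiv]
  · simp [div_self hC.ne']
  · refine ContinuousOn.intervalIntegrable fun w hw => ContinuousAt.continuousWithinAt ?_
    have hw0 := (hpos w hw).ne'
    have hCw : C / w ≠ 0 := div_ne_zero hC.ne' hw0
    fun_prop (disch := assumption)

theorem lintegral_ofReal_indicator_Icc_log_div_pow_mul_inv {b C K : ℝ} (hb : 0 < b)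
    (hbC : b ≤ C) (hK : 0 ≤ K) (n : ℕ) :
    ∫⁻ w, ENNReal.ofReal
        ((Icc b C).indicator (fun w => K * (Real.log (C / w) ^ n * w⁻¹)) w) =
      ENNReal.ofReal (K * (Real.log (C / b) ^ (n + 1) / (n + 1))) := by
  have hpos : ∀ w ∈ Icc b C, 0 < w := fun w hw => hb.trans_le hw.1
  have hnonneg : 0 ≤ (Icc b C).indicator (fun w => K * (Real.log (C / w) ^ n * w⁻¹)) := by
    refine indicator_nonneg fun w hw => ?_
    have : 0 ≤ Real.log (C / w) := Real.log_nonneg ((one_le_div (hpos w hw)).2 hw.2)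
    have := hpos w hw
    positivity
  have hint : IntegrableOn (fun w => K * (Real.log (C / w) ^ n * w⁻¹)) (Icc b C) := by
    refine ContinuousOn.integrableOn_Icc fun w hw => ContinuousAt.continuousWithinAt ?_
    have hw0 := (hpos w hw).ne'
    have hCw : C / w ≠ 0 := div_ne_zero (hb.trans_le hbC).ne' hw0
    fun_prop (disch := assumption)
  rw [← ofReal_integral_eq_lintegral_ofReal
      ((integrable_indicator_iff measurableSet_Icc).2 hint) (Filter.Eventually.of_forall hnonneg),
    integral_indicator measurableSet_Icc,
    integral_Icc_eq_integral_Ioc, ← intervalIntegral.integral_of_le hbC,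
    intervalIntegral.integral_const_mul, integral_log_div_pow_mul_inv hb (hb.trans_le hbC)]

/-- The density of a cascade of `n + 1` misaligned links; `n = 0` is a single link. -/
noncomputable def cascadePdf (ξ C : ℝ) (n : ℕ) (x : ℝ) : ℝ :=
  if 0 < x ∧ x ≤ C then
    ξ ^ (n + 1) / ((n ! : ℝ) * C ^ ξ) * x ^ (ξ - 1) * Real.log (C / x) ^ n
  else 0

section cascadePdf

variable {ξ C : ℝ} {n : ℕ}

theorem cascadePdf_nonneg (hξ : 0 ≤ ξ) (x : ℝ) : 0 ≤ cascadePdf ξ C n x := by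
  unfold cascadePdf
  split_ifs with hx
  · have hlog : 0 ≤ Real.log (C / x) := Real.log_nonneg ((one_le_div hx.1).2 hx.2)
    have hC : 0 ≤ C ^ ξ := Real.rpow_nonneg (hx.1.le.trans hx.2) ξ
    have hx' : 0 ≤ x ^ (ξ - 1) := Real.rpow_nonneg hx.1.le _
    positivity
  · rfl

theorem measurable_cascadePdf : Measurable (cascadePdf ξ C n) :=
  Measurable.ite (measurableSet_Ioc (a := 0) (b := C)) (by fun_prop) measurable_const

theorem cascadePdf_mul_cascadePdf_div_mul_abs_inv {a x : ℝ} (ha : 0 < a) (hx : 0 < x) (w : ℝ) :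
    cascadePdf ξ C n w * cascadePdf ξ a 0 (x / w) * |w⁻¹| =
      (Icc (x / a) C).indicator (fun w => ξ ^ (n + 2) / ((n ! : ℝ) * (C * a) ^ ξ) *
        x ^ (ξ - 1) * (Real.log (C / w) ^ n * w⁻¹)) w := by
  unfold cascadePdf
  by_cases hw : w ∈ Icc (x / a) C
  · have hw0 : 0 < w := (div_pos hx ha).trans_le hw.1
    have hxw : x / w ≤ a := by
      rw [div_le_iff₀ hw0]
      exact (div_le_iff₀' ha).1 hw.1
    rw [indicator_of_mem hw, if_pos ⟨hw0, hw.2⟩, if_pos ⟨div_pos hx hw0, hxw⟩,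
      Real.div_rpow hx.le hw0.le, Real.mul_rpow (hw0.le.trans hw.2) ha.le,
      abs_of_pos (inv_pos.2 hw0)]
    have : 0 < w ^ (ξ - 1) := Real.rpow_pos_of_pos hw0 _
    field_simp
    ring
  · rw [indicator_of_notMem hw]
    split_ifs with h₁ h₂ <;> try simp only [zero_mul, mul_zero]
    refine absurd ⟨?_, h₁.2⟩ hw
    rw [div_le_iff₀ ha, ← div_le_iff₀' h₁.1]
    exact h₂.2

theorem mellinConv_cascadePdf {a : ℝ} (hξ : 0 ≤ ξ) (hC : 0 < C) (ha : 0 < a) (x : ℝ) :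
    mellinConv (fun w => ENNReal.ofReal (cascadePdf ξ C n w))
        (fun t => ENNReal.ofReal (cascadePdf ξ a 0 t)) x =
      ENNReal.ofReal (cascadePdf ξ (C * a) (n + 1) x) := by
  have hprod : ∀ w, ENNReal.ofReal (cascadePdf ξ C n w) *
      ENNReal.ofReal (cascadePdf ξ a 0 (x / w)) * ENNReal.ofReal |w⁻¹| =
        ENNReal.ofReal (cascadePdf ξ C n w * cascadePdf ξ a 0 (x / w) * |w⁻¹|) := by
    intro w
    rw [ENNReal.ofReal_mul (mul_nonneg (cascadePdf_nonneg hξ _) (cascadePdf_nonneg hξ _)),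
      ENNReal.ofReal_mul (cascadePdf_nonneg hξ _)]
  unfold mellinConv
  simp_rw [hprod]
  rcases le_or_gt x 0 with hx | hx
  · have hvanish : ∀ w, cascadePdf ξ C n w * cascadePdf ξ a 0 (x / w) = 0 := by
      intro w
      unfold cascadePdf
      split_ifs with hw hxw <;> try simp only [mul_zero, zero_mul]
      exact absurd hxw.1 (not_lt.2 (div_nonpos_of_nonpos_of_nonneg hx hw.1.le))
    simp only [hvanish, zero_mul, ENNReal.ofReal_zero, lintegral_zero]
    rw [cascadePdf, if_neg fun h => hx.not_gt h.1, ENNReal.ofReal_zero]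
  simp_rw [cascadePdf_mul_cascadePdf_div_mul_abs_inv ha hx]
  by_cases hxCa : x ≤ C * a
  · rw [lintegral_ofReal_indicator_Icc_log_div_pow_mul_inv (div_pos hx ha)
      ((div_le_iff₀ ha).2 hxCa) (by positivity), cascadePdf, if_pos ⟨hx, hxCa⟩,
      div_div_eq_mul_div, Nat.factorial_succ]
    congr 1
    push_cast
    field_simp
  · have hempty : Icc (x / a) C = ∅ := Icc_eq_empty fun h => hxCa ((div_le_iff₀ ha).1 h)
    simp [hempty, cascadePdf, hxCa]

end cascadePdf

theorem ae_eq_ofReal_cascadePdf_zero (ξ a : ℝ) :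
    (fun t => ENNReal.ofReal (if 0 ≤ t ∧ t ≤ a then ξ / a ^ ξ * t ^ (ξ - 1) else 0))
      =ᵐ[volume] fun t => ENNReal.ofReal (cascadePdf ξ a 0 t) := by
  filter_upwards [Measure.ae_ne volume 0] with t ht
  simp [cascadePdf, ht.symm.le_iff_lt]

/-- Inductive step of Theorem 2 (Appendix A): multiplying the cascade of `M`
misaligned links by one further independent misaligned link yields the cascaded
density for `M + 1` links. -/
theorem misalignment_cascade_inductive_step
    {Ω : Type*} [MeasurableSpace Ω] (P : Measure Ω) [IsProbabilityMeasure P]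
    (ξ : ℝ) (hξ : 0 < ξ) (M : ℕ) (hM : 1 ≤ M)
    (C a : ℝ) (hC : 0 < C) (ha : 0 < a)
    (W l : Ω → ℝ) (hW : Measurable W) (hl : Measurable l)
    (hindep : IndepFun W l P)
    (hdW : Measure.map W P = volume.withDensity (fun x =>
      ENNReal.ofReal (if 0 < x ∧ x ≤ C then
        (ξ ^ M / ((Nat.factorial (M - 1) : ℝ) * C ^ ξ)) * x ^ (ξ - 1) *
          (Real.log (C / x)) ^ (M - 1)
      else 0)))
    (hdl : Measure.map l P = volume.withDensity (fun t =>
      ENNReal.ofReal (if 0 ≤ t ∧ t ≤ a then (ξ / a ^ ξ) * t ^ (ξ - 1) else 0))) :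
    Measure.map (fun ω => W ω * l ω) P = volume.withDensity (fun x =>
      ENNReal.ofReal (if 0 < x ∧ x ≤ C * a then
        (ξ ^ (M + 1) / ((Nat.factorial M : ℝ) * (C * a) ^ ξ)) * x ^ (ξ - 1) *
          (Real.log (C * a / x)) ^ M
      else 0)) := by
  obtain ⟨n, rfl⟩ := Nat.exists_eq_add_of_le' hM
  have hdl' := hdl.trans (withDensity_congr_ae (ae_eq_ofReal_cascadePdf_zero ξ a))
  rw [hindep.map_mul_eq_withDensity_mellinConv hW hl
    (ENNReal.measurable_ofReal.comp measurable_cascadePdf)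
    (ENNReal.measurable_ofReal.comp measurable_cascadePdf) hdW hdl']
  exact congrArg _ (funext (mellinConv_cascadePdf hξ.le hC ha))
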